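/- Let φ be a continuous K-algebra homomorphism K{{x}} → K{{x,y} (restriction of a substitution homomorphism) and let δ : K{{x}} → K{{x,y} be any continuous K-linear map of the form δ = (dφ) ∘ d − d ∘ φ where dφ is a continuous K-algebra homomorphism agreeing with φ on K{{x}} except at differentials. Then δ satisfies δ(•_m(f_1,…,f_m)) = Σ_{i=1}^m •_m(φ(f_1),…,φ(f_{i−1}), δ(f_i), φ(f_{i+1}),…,φ(f_m)) for all m ≥ 2 and f_1,…,f_m ∈ K{{x}}; consequently any continuous K-linear map δ : K{{x}} → K{{x,y} satisfying this identity together with δ(x) = 0 and δ(1_P) = 0 is identically zero. -/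

import Mathlib

/-!
Both parts rest on one uniqueness principle: a continuous `K`-linear map on `K{{x}}` that
kills `1_P` and `x`, and kills `•_m(f₁,…,f_m)` whenever it kills every `fᵢ`, is zero. By
induction on trees such a map kills every planar monomial in `x`, hence every truncation of
a series, and the truncations of `f` converge to `f` in the `x`-adic topology.

Applied to `dφ - φ` on `K{{x}}`, the principle shows that `dφ` restricts to `φ`; then the
Leibniz rule for `d` and the multiplicativity of `φ` and `dφ` give the twisted Leibniz rule
for `δ` by a direct computation. Conversely, a map obeying the twisted Leibniz rule kills
`•_m(f₁,…,f_m)` as soon as it kills every `fᵢ`, since each summand then has a zero entry.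
-/

namespace Planar

inductive PVar : Type
  | vx : PVar
  | vy : PVar
deriving DecidableEq

/-- A finite planar reduced rooted tree: every internal vertex has at least two
(ordered) children, encoded as `node t₁ t₂ rest` with children list `t₁ :: t₂ :: rest`;
leaves are labeled by a variable (an isomorphism class of such a labeled tree is
faithfully represented by this inductive data). -/
inductive PTree : Type
  | leaf : PVar → PTree
  | node : PTree → PTree → List PTree → PTree

namespace PTree

/-- The number of leaves carrying the label `v`. -/
def countLeaf (v : PVar) : PTree → ℕ
  | .leaf w => if w = v then 1 else 0
  | .node t1 t2 rest =>
      countLeaf v t1 + countLeaf v t2 + (rest.attach.map fun t => countLeaf v t.1).sum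
decreasing_by
  all_goals simp_wf
  · omega
  · omega
  · have := List.sizeOf_lt_of_mem t.2
    omega

end PTree

/-- `P'(x,y)`: planar monomials plus the empty tree `1_P` (= `none`). -/
abbrev PT := Option PTree

/-- `deg_x`: the number of leaves labeled `x`. -/
def degx (S : PT) : ℕ := S.elim 0 (PTree.countLeaf .vx)

/-- `deg_y`: the number of leaves labeled `y`. -/
def degy (S : PT) : ℕ := S.elim 0 (PTree.countLeaf .vy)

/-- `m`-ary grafting `•_m` on `P'(x,y)` (`m = l.length`): join the non-trivial entries
at a new root; the conventions `•_m(1_P,…,1_P) = 1_P`, dropping of `1_P`-entries and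
`•_2(S,1_P) = •_2(1_P,S) = S` amount to discarding the `1_P`-entries first. -/
def graft (l : List PT) : PT :=
  match l.reduceOption with
  | [] => none
  | [t] => some t
  | t1 :: t2 :: ts => some (.node t1 t2 ts)

variable (K : Type) [Field K]

/-- The algebra `K{{x,y}` of planar power series in `x` and polynomials in `y`:
functions on `P'(x,y)` such that for every `n` only finitely many monomials of
`x`-degree `n` have a nonzero coefficient. -/
def PSer : Type := {f : PT → K // ∀ n : ℕ, {S : PT | f S ≠ 0 ∧ degx S = n}.Finite}

variable {K}

namespace PSer

private lemma finite_add (f g : PSer K) (n : ℕ) :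
    {S : PT | f.1 S + g.1 S ≠ 0 ∧ degx S = n}.Finite := by
  apply ((f.2 n).union (g.2 n)).subset
  rintro S ⟨hne, hdeg⟩
  by_cases h1 : f.1 S = 0
  · exact Or.inr ⟨by simpa [h1] using hne, hdeg⟩
  · exact Or.inl ⟨h1, hdeg⟩

private lemma finite_neg (f : PSer K) (n : ℕ) :
    {S : PT | -f.1 S ≠ 0 ∧ degx S = n}.Finite := by
  apply (f.2 n).subset
  rintro S ⟨hne, hdeg⟩
  exact ⟨by simpa using hne, hdeg⟩

private lemma finite_zero (n : ℕ) :
    {S : PT | (0 : K) ≠ 0 ∧ degx S = n}.Finite := by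
  convert Set.finite_empty using 1
  ext S; simp

private lemma finite_smul (a : K) (f : PSer K) (n : ℕ) :
    {S : PT | a * f.1 S ≠ 0 ∧ degx S = n}.Finite := by
  apply (f.2 n).subset
  rintro S ⟨hne, hdeg⟩
  exact ⟨fun h => hne (by simp [h]), hdeg⟩

noncomputable instance : AddCommGroup (PSer K) where
  add f g := ⟨fun S => f.1 S + g.1 S, finite_add f g⟩
  zero := ⟨fun _ => 0, finite_zero⟩
  neg f := ⟨fun S => -f.1 S, finite_neg f⟩
  add_assoc f g h := Subtype.ext (funext fun S => add_assoc _ _ _)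
  add_comm f g := Subtype.ext (funext fun S => add_comm _ _)
  zero_add f := Subtype.ext (funext fun S => zero_add _)
  add_zero f := Subtype.ext (funext fun S => add_zero _)
  neg_add_cancel f := Subtype.ext (funext fun S => neg_add_cancel _)
  nsmul n f := ⟨fun S => (n : K) * f.1 S, finite_smul _ f⟩
  nsmul_zero f := Subtype.ext (funext fun S => by
    show ((0 : ℕ) : K) * f.1 S = (0 : K); simp)
  nsmul_succ n f := Subtype.ext (funext fun S => by
    show ((n + 1 : ℕ) : K) * f.1 S = (n : K) * f.1 S + f.1 S; push_cast; ring)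
  zsmul n f := ⟨fun S => (n : K) * f.1 S, finite_smul _ f⟩
  zsmul_zero' f := Subtype.ext (funext fun S => by
    show ((0 : ℤ) : K) * f.1 S = (0 : K); simp)
  zsmul_succ' n f := Subtype.ext (funext fun S => by
    show ((Int.ofNat n.succ : ℤ) : K) * f.1 S = ((Int.ofNat n : ℤ) : K) * f.1 S + f.1 S
    simp only [Int.ofNat_eq_coe]; push_cast; ring)
  zsmul_neg' n f := Subtype.ext (funext fun S => by
    show ((Int.negSucc n : ℤ) : K) * f.1 S = -(((n.succ : ℤ) : K) * f.1 S)
    simp [Int.negSucc_eq]; push_cast; ring)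

noncomputable instance : Module K (PSer K) where
  smul a f := ⟨fun S => a * f.1 S, finite_smul a f⟩
  one_smul f := Subtype.ext (funext fun S => one_mul _)
  mul_smul a b f := Subtype.ext (funext fun S => mul_assoc _ _ _)
  smul_zero a := Subtype.ext (funext fun S => mul_zero _)
  smul_add a f g := Subtype.ext (funext fun S => mul_add _ _ _)
  add_smul a b f := Subtype.ext (funext fun S => add_mul _ _ _)
  zero_smul f := Subtype.ext (funext fun S => zero_mul _)

@[simp] lemma add_coeff (f g : PSer K) (S : PT) : (f + g).1 S = f.1 S + g.1 S := rfl
@[simp] lemma smul_coeff (a : K) (f : PSer K) (S : PT) : (a • f).1 S = a * f.1 S := rfl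
@[simp] lemma zero_coeff (S : PT) : (0 : PSer K).1 S = 0 := rfl

end PSer

open PSer

/-- The indicator series of a single planar monomial `S ∈ P'(x,y)`. -/
noncomputable def mono (S : PT) : PSer K := by
  classical
  refine ⟨fun T => if T = S then 1 else 0, fun n => (Set.finite_singleton S).subset ?_⟩
  rintro T ⟨h1, -⟩
  by_contra hc
  exact h1 (if_neg (by simpa [Set.mem_singleton_iff] using hc))

/-- The unit series `1_P` (the empty tree). -/
noncomputable def onePS : PSer K := mono none

/-- The series `x` (the one-vertex tree labeled `x`). -/
noncomputable def Xps : PSer K := mono (some (.leaf .vx))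

/-- The series `y = dx` (the one-vertex tree labeled `y`). -/
noncomputable def Yps : PSer K := mono (some (.leaf .vy))

/-- Coefficient of the product `•_m(f₁,…,f_m)` at `S`: the (finite) sum of
`c_{S₁}(f₁)⋯c_{S_m}(f_m)` over all decompositions `S = •_m(S₁,…,S_m)`. -/
noncomputable def bulletCoeff (fs : List (PSer K)) (S : PT) : K :=
  ∑ᶠ t ∈ {t : List PT | t.length = fs.length ∧ graft t = S},
    (List.zipWith (fun f u => f.1 u) fs t).prod

open Classical in
/-- The `m`-ary product `•_m(f₁,…,f_m)` on `K{{x,y}` (`m = fs.length`). -/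
noncomputable def bullet (fs : List (PSer K)) : PSer K :=
  if h : ∀ n : ℕ, {S : PT | bulletCoeff fs S ≠ 0 ∧ degx S = n}.Finite
  then ⟨bulletCoeff fs, h⟩ else 0

/-- The `x`-order `ord_x(f) ∈ ℕ ∪ {∞}`: the least `x`-degree of a monomial with
nonzero coefficient (`∞` for `f = 0`). -/
noncomputable def ordx (f : PSer K) : ℕ∞ :=
  ⨅ S ∈ {S : PT | f.1 S ≠ 0}, (degx S : ℕ∞)

/-- The `x`-adic absolute value `|f|ₓ = (1/2)^{ord_x f}` (`= 0` for `f = 0`). -/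
noncomputable def normx (f : PSer K) : ℝ :=
  if ordx f = ⊤ then 0 else (2⁻¹ : ℝ) ^ (ordx f).toNat

/-- The `x`-adic distance `|f - g|ₓ`. -/
noncomputable def distx (f g : PSer K) : ℝ := normx (f - g)

/-- A Cauchy sequence for the `x`-adic distance. -/
def IsCauchySeq (u : ℕ → PSer K) : Prop :=
  ∀ ε : ℝ, 0 < ε → ∃ N : ℕ, ∀ p q : ℕ, N ≤ p → N ≤ q → distx (u p) (u q) < ε

/-- Convergence of a sequence to `f` for the `x`-adic distance. -/
def TendstoSeq (u : ℕ → PSer K) (f : PSer K) : Prop :=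
  ∀ ε : ℝ, 0 < ε → ∃ N : ℕ, ∀ p : ℕ, N ≤ p → distx (u p) f < ε

/-- Continuity of a map between two spaces equipped with distance functions. -/
def ContWrt {α β : Type*} (dα : α → α → ℝ) (dβ : β → β → ℝ) (φ : α → β) : Prop :=
  ∀ a : α, ∀ ε : ℝ, 0 < ε → ∃ δ : ℝ, 0 < δ ∧ ∀ b : α, dα b a < δ → dβ (φ b) (φ a) < ε

/-- The property of being supported on monomials all of whose leaves are labeled `x`. -/
def OnlyX (f : PSer K) : Prop := ∀ S : PT, f.1 S ≠ 0 → degy S = 0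

variable (K) in
/-- `K{{x}}`, the closed unital subalgebra of `K{{x,y}` generated by `x`, as a
submodule: the series supported on `1_P` and trees all of whose leaves are labeled `x`. -/
noncomputable def kxSub : Submodule K (PSer K) where
  carrier := {f | OnlyX f}
  add_mem' := by
    intro f g hf hg S hS
    by_cases h1 : f.1 S = 0
    · exact hg S (by simpa [h1] using hS)
    · exact hf S h1
  zero_mem' := by intro S hS; simp at hS
  smul_mem' := by
    intro a f hf S hS
    exact hf S (fun h => hS (by simp [h]))

variable (K) in
/-- The space `K{{x}}` of planar power series in `x`. -/
abbrev Kx : Type _ := ↥(kxSub K)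

@[simp] lemma mem_kxSub {f : PSer K} : f ∈ kxSub K ↔ OnlyX f := Iff.rfl

/-- The `x`-adic distance on `K{{x}}`. -/
noncomputable def distKx (f g : Kx K) : ℝ := distx f.1 g.1

lemma onePS_mem_kxSub : onePS ∈ kxSub (K := K) := by
  intro S hS
  by_cases h : S = none
  · subst h; rfl
  · exact absurd (if_neg h) hS

lemma Xps_mem_kxSub : Xps ∈ kxSub (K := K) := by
  intro S hS
  by_cases h : S = some (.leaf .vx)
  · subst h; simp [degy, PTree.countLeaf]
  · exact absurd (if_neg h) hS

/-- `1_P` as an element of `K{{x}}`. -/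
noncomputable def oneX : Kx K := ⟨onePS, onePS_mem_kxSub⟩

/-- `x` as an element of `K{{x}}`. -/
noncomputable def xX : Kx K := ⟨Xps, Xps_mem_kxSub⟩

open Classical in
/-- The `m`-ary product `•_m` on `K{{x}}` (`m = fs.length`). -/
noncomputable def bulletX (fs : List (Kx K)) : Kx K :=
  if h : bullet (fs.map (fun f => f.1)) ∈ kxSub K
  then ⟨bullet (fs.map (fun f => f.1)), h⟩ else 0

open Classical in
/-- The homogeneous component of degree `n` (w.r.t. `deg_x`) of a planar power series. -/
noncomputable def comp (f : PSer K) (n : ℕ) : PSer K :=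
  ⟨fun S => if degx S = n then f.1 S else 0, by
    intro m
    apply (f.2 m).subset
    rintro S ⟨h1, h2⟩
    refine ⟨?_, h2⟩
    by_cases hd : degx S = n
    · simpa [hd] using h1
    · simp [hd] at h1⟩

/-- The homogeneous component of degree `n` of an element of `K{{x}}`. -/
noncomputable def compX (f : Kx K) (n : ℕ) : Kx K :=
  ⟨comp f.1 n, by
    intro S hS
    apply (mem_kxSub.mp f.2) S
    simp only [comp] at hS
    by_cases hd : degx S = n
    · simpa [hd] using hS
    · simp [hd] at hS⟩

/-- A substitution homomorphism `φ_{(g,h)} : K{{x,y} → K{{x,y}`: `K`-linear, compatible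
with all grafting operations `•_m` (`m ≥ 2`), unital, `x ↦ g`, `y ↦ h`, and continuous
for the `x`-adic topology. -/
structure IsSubstHom (g h : PSer K) (φ : PSer K → PSer K) : Prop where
  linear : IsLinearMap K φ
  map_graft : ∀ fs : List (PSer K), 2 ≤ fs.length → φ (bullet fs) = bullet (fs.map φ)
  map_one : φ onePS = onePS
  map_X : φ Xps = g
  map_Y : φ Yps = h
  cont : ContWrt distx distx φ

/-- A substitution homomorphism `φ_g : K{{x}} → K{{x}}` with `x ↦ g`. -/
structure IsSubstHomX (g : Kx K) (φ : Kx K → Kx K) : Prop where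
  linear : IsLinearMap K φ
  map_graft : ∀ fs : List (Kx K), 2 ≤ fs.length → φ (bulletX fs) = bulletX (fs.map φ)
  map_one : φ oneX = oneX
  map_X : φ xX = g
  cont : ContWrt distKx distKx φ

/-- The universal derivation `d : K{{x}} → K{{x,y}`: continuous, `K`-linear, `d x = y`,
and satisfying the Leibniz rule for every grafting operation `•_m` (`m ≥ 2`). -/
structure IsUDeriv (d : Kx K → PSer K) : Prop where
  linear : IsLinearMap K d
  cont : ContWrt distKx distx d
  map_X : d xX = Yps
  leibniz : ∀ fs : List (Kx K), 2 ≤ fs.length →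
    d (bulletX fs) = ∑ i : Fin fs.length,
      bullet ((fs.map (fun f => f.1)).set i.1 (d (fs.get i)))

/-- The `k`-ary planar exponential series `Exp_k(x)`: constant coefficient `1`,
coefficient `1` at `x`, and `Exp_k(kx) = •_k(Exp_k(x),…,Exp_k(x))`. -/
structure IsExp (k : ℕ) (f : Kx K) : Prop where
  coeff_one : f.1.1 none = 1
  coeff_X : f.1.1 (some (.leaf .vx)) = 1
  funEq : ∀ φ : Kx K → Kx K, IsSubstHomX ((k : K) • xX) φ →
    φ f = bulletX (List.replicate k f)

/-- `ℓ = Log_k(1+x)`, the planar logarithm attached to a planar exponential series `e`: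
`ord_x ℓ ≥ 1` and `ℓ(e - 1) = x`. -/
structure IsLogOf (e ℓ : Kx K) : Prop where
  ord : 1 ≤ ordx ℓ.1
  eq : ∀ φ : Kx K → Kx K, IsSubstHomX (e - oneX) φ → φ ℓ = xX

end Planar

namespace Planar

variable {K : Type} [Field K]

namespace PSer

@[simp] lemma neg_coeff (f : PSer K) (S : PT) : (-f).1 S = -f.1 S := rfl

@[simp] lemma sub_coeff (f g : PSer K) (S : PT) : (f - g).1 S = f.1 S - g.1 S := by
  rw [sub_eq_add_neg, add_coeff, neg_coeff, ← sub_eq_add_neg]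

noncomputable def lcoeff (S : PT) : PSer K →ₗ[K] K where
  toFun f := f.1 S
  map_add' _ _ := rfl
  map_smul' _ _ := rfl

lemma sum_coeff {ι : Type*} (s : Finset ι) (F : ι → PSer K) (S : PT) :
    (∑ i ∈ s, F i).1 S = ∑ i ∈ s, (F i).1 S :=
  map_sum (lcoeff S) F s

lemma finite_support_degx_le (f : PSer K) (n : ℕ) :
    {S : PT | f.1 S ≠ 0 ∧ degx S ≤ n}.Finite :=
  ((Set.finite_Iic n).biUnion fun k _ => f.2 k).subset
    fun _ hS => Set.mem_biUnion (Set.mem_Iic.mpr hS.2) ⟨hS.1, rfl⟩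

end PSer

open Classical in
@[simp] lemma mono_coeff (S T : PT) : (mono S : PSer K).1 T = if T = S then 1 else 0 := rfl

lemma PTree.countLeaf_node (v : PVar) (t₁ t₂ : PTree) (ts : List PTree) :
    PTree.countLeaf v (.node t₁ t₂ ts) =
      PTree.countLeaf v t₁ + PTree.countLeaf v t₂ + (ts.map (PTree.countLeaf v)).sum := by
  rw [PTree.countLeaf, List.attach_map_val (f := PTree.countLeaf v)]

lemma countLeaf_graft (v : PVar) (t : List PT) :
    (graft t).elim 0 (PTree.countLeaf v) = (t.map fun S => S.elim 0 (PTree.countLeaf v)).sum := by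
  have hsum : (t.map fun S => S.elim 0 (PTree.countLeaf v)).sum =
      (t.reduceOption.map (PTree.countLeaf v)).sum := by
    induction t with
    | nil => rfl
    | cons a t ih => cases a <;> simp [ih]
  rw [hsum, graft]
  rcases t.reduceOption with _ | ⟨a, _ | ⟨b, c⟩⟩
  · rfl
  · simp
  · simp [PTree.countLeaf_node, add_assoc]

lemma degx_graft (t : List PT) : degx (graft t) = (t.map degx).sum := countLeaf_graft .vx t

lemma degy_graft (t : List PT) : degy (graft t) = (t.map degy).sum := countLeaf_graft .vy t

def children : PT → List PT
  | some (.node t₁ t₂ ts) => some t₁ :: some t₂ :: ts.map some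
  | _ => []

lemma graft_children (t₁ t₂ : PTree) (ts : List PTree) :
    graft (children (some (.node t₁ t₂ ts))) = some (.node t₁ t₂ ts) := by
  have hts : (ts.map some).reduceOption = ts := by induction ts <;> simp [*]
  simp [graft, children, hts]

lemma eq_none_or_eq_graft_or_mem_children {t : List PT} {u : PT} (hu : u ∈ t) :
    u = none ∨ u = graft t ∨ u ∈ children (graft t) := by
  rcases u with _ | w
  · exact Or.inl rfl
  have hw : w ∈ t.reduceOption := List.reduceOption_mem_iff.mpr hu
  rw [graft]
  rcases hr : t.reduceOption with _ | ⟨a, _ | ⟨b, c⟩⟩ <;> rw [hr] at hw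
  · simp at hw
  · simp_all
  · right; right
    simpa [children] using hw

lemma finite_lists_of_mem {α : Type*} {B : Set α} (hB : B.Finite) (m : ℕ) :
    {t : List α | t.length = m ∧ ∀ u ∈ t, u ∈ B}.Finite := by
  have := hB.to_subtype
  refine ((List.finite_length_eq B m).image (List.map Subtype.val)).subset ?_
  rintro t ⟨hlen, hmem⟩
  exact ⟨t.attachWith B hmem, (List.length_attachWith ..).trans hlen, List.unattach_attachWith⟩

lemma finite_graft_fiber (m : ℕ) (S : PT) :
    {t : List PT | t.length = m ∧ graft t = S}.Finite := by
  refine (finite_lists_of_mem (B := {none, S} ∪ {u | u ∈ children S})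
    ((Set.toFinite {none, S}).union (children S).finite_toSet) m).subset ?_
  rintro t ⟨hlen, rfl⟩
  refine ⟨hlen, fun u hu => ?_⟩
  rcases eq_none_or_eq_graft_or_mem_children hu with h | h | h
  · exact Or.inl (Or.inl h)
  · exact Or.inl (Or.inr h)
  · exact Or.inr h

noncomputable def graftFiber (m : ℕ) (S : PT) : Finset (List PT) :=
  (finite_graft_fiber m S).toFinset

lemma mem_graftFiber {m : ℕ} {S : PT} {t : List PT} :
    t ∈ graftFiber m S ↔ t.length = m ∧ graft t = S :=
  Set.Finite.mem_toFinset _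

lemma bulletCoeff_eq_sum (fs : List (PSer K)) (S : PT) :
    bulletCoeff fs S =
      ∑ t ∈ graftFiber fs.length S, (List.zipWith (fun f u => f.1 u) fs t).prod :=
  finsum_mem_eq_finite_toFinset_sum _ _

lemma coeff_ne_zero_of_prod_ne_zero {fs : List (PSer K)} {t : List PT} (hlen : t.length = fs.length)
    (h : (List.zipWith (fun f u => f.1 u) fs t).prod ≠ 0) (i : ℕ) (hi : i < fs.length) :
    fs[i].1 (t[i]'(hlen ▸ hi)) ≠ 0 := by
  intro hz
  refine h (List.prod_eq_zero ?_)
  have hi' : i < (List.zipWith (fun (f : PSer K) u => f.1 u) fs t).length := by simp [hlen, hi]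
  simpa [hz] using List.getElem_mem hi'

lemma finite_bulletCoeff_support (fs : List (PSer K)) (n : ℕ) :
    {S : PT | bulletCoeff fs S ≠ 0 ∧ degx S = n}.Finite := by
  have hB : (⋃ f ∈ {f | f ∈ fs}, {u : PT | f.1 u ≠ 0 ∧ degx u ≤ n}).Finite :=
    fs.finite_toSet.biUnion fun f _ => f.finite_support_degx_le n
  refine ((finite_lists_of_mem hB fs.length).image graft).subset ?_
  rintro S ⟨hne, rfl⟩
  rw [bulletCoeff_eq_sum] at hne
  obtain ⟨t, ht, hprod⟩ := Finset.exists_ne_zero_of_sum_ne_zero hne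
  obtain ⟨hlen, rfl⟩ := mem_graftFiber.mp ht
  refine ⟨t, ⟨hlen, fun u hu => ?_⟩, rfl⟩
  obtain ⟨i, hi, rfl⟩ := List.mem_iff_getElem.mp hu
  have hdeg : degx t[i] ≤ degx (graft t) :=
    degx_graft t ▸ List.le_sum_of_mem (List.mem_map_of_mem (List.getElem_mem hi))
  exact Set.mem_biUnion (List.getElem_mem (hlen ▸ hi))
    ⟨coeff_ne_zero_of_prod_ne_zero hlen hprod i (hlen ▸ hi), hdeg⟩

lemma bullet_coeff (fs : List (PSer K)) : (bullet fs).1 = bulletCoeff fs :=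
  congrArg Subtype.val (dif_pos (finite_bulletCoeff_support fs))

lemma bullet_eq_zero_of_zero_mem {fs : List (PSer K)} (h : 0 ∈ fs) : bullet fs = 0 := by
  refine Subtype.ext (funext fun S => ?_)
  rw [bullet_coeff, bulletCoeff_eq_sum]
  refine Finset.sum_eq_zero fun t ht => ?_
  by_contra hprod
  obtain ⟨i, hi, hz⟩ := List.mem_iff_getElem.mp h
  exact coeff_ne_zero_of_prod_ne_zero (mem_graftFiber.mp ht).1 hprod i hi (by simp [hz])

open Classical in
lemma prod_zipWith_mono (l t : List PT) (hlen : t.length = l.length) :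
    (List.zipWith (fun f u => f.1 u) (l.map fun S => (mono S : PSer K)) t).prod =
      if t = l then 1 else 0 := by
  induction l generalizing t with
  | nil => simp [List.length_eq_zero_iff.mp hlen]
  | cons a l ih =>
    obtain _ | ⟨b, t⟩ := t
    · simp at hlen
    rw [List.map_cons, List.zipWith_cons_cons, List.prod_cons, ih t (by simpa using hlen)]
    by_cases hb : b = a <;> by_cases ht : t = l <;> simp [hb, ht]

lemma bullet_map_mono (l : List PT) :
    bullet (l.map fun S => (mono S : PSer K)) = mono (graft l) := by
  classical
  refine Subtype.ext (funext fun S => ?_)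
  rw [bullet_coeff, bulletCoeff_eq_sum, List.length_map,
    Finset.sum_congr rfl fun t ht => prod_zipWith_mono l t (mem_graftFiber.mp ht).1,
    Finset.sum_ite_eq', mono_coeff]
  simp only [mem_graftFiber, true_and, eq_comm]

lemma zipWith_set (L : List (PSer K)) (t : List PT) (hlen : t.length = L.length)
    {i : ℕ} (hi : i < L.length) (c : PSer K) :
    List.zipWith (fun f u => f.1 u) (L.set i c) t =
      (List.zipWith (fun f u => f.1 u) L t).set i (c.1 (t[i]'(hlen ▸ hi))) := by
  refine List.ext_getElem (by simp) fun j _ _ => ?_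
  simp only [List.getElem_zipWith, List.getElem_set]
  split_ifs with hij
  · subst hij; rfl
  · rfl

lemma bullet_set_sub (L : List (PSer K)) {i : ℕ} (hi : i < L.length) (a b : PSer K) :
    bullet (L.set i (a - b)) = bullet (L.set i a) - bullet (L.set i b) := by
  refine Subtype.ext (funext fun S => ?_)
  simp only [PSer.sub_coeff, bullet_coeff, bulletCoeff_eq_sum, List.length_set,
    ← Finset.sum_sub_distrib]
  refine Finset.sum_congr rfl fun t ht => ?_
  have hlen := (mem_graftFiber.mp ht).1
  have hi' : i < (List.zipWith (fun (f : PSer K) u => f.1 u) L t).length := by simp [hlen, hi]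
  simp only [zipWith_set L t hlen hi, List.prod_set, if_pos hi', PSer.sub_coeff]
  ring

lemma onlyX_bullet {fs : List (PSer K)} (h : ∀ f ∈ fs, OnlyX f) : OnlyX (bullet fs) := by
  intro S hS
  rw [bullet_coeff, bulletCoeff_eq_sum] at hS
  obtain ⟨t, ht, hprod⟩ := Finset.exists_ne_zero_of_sum_ne_zero hS
  obtain ⟨hlen, rfl⟩ := mem_graftFiber.mp ht
  rw [degy_graft, List.sum_eq_zero]
  intro n hn
  obtain ⟨u, hu, rfl⟩ := List.mem_map.mp hn
  obtain ⟨i, hi, rfl⟩ := List.mem_iff_getElem.mp hu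
  exact h _ (List.getElem_mem (hlen ▸ hi)) _
    (coeff_ne_zero_of_prod_ne_zero hlen hprod i (hlen ▸ hi))

lemma coe_bulletX (fs : List (Kx K)) : (bulletX fs).1 = bullet (fs.map (·.1)) := by
  rw [bulletX, dif_pos]
  refine onlyX_bullet fun f hf => ?_
  obtain ⟨g, -, rfl⟩ := List.mem_map.mp hf
  exact g.2

lemma ordx_le {f : PSer K} {S : PT} (h : f.1 S ≠ 0) : ordx f ≤ degx S := iInf₂_le S h

lemma le_ordx {f : PSer K} {n : ℕ∞} (h : ∀ S, f.1 S ≠ 0 → n ≤ degx S) : n ≤ ordx f :=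
  le_iInf₂ h

lemma ordx_ne_top {f : PSer K} (hf : f ≠ 0) : ordx f ≠ ⊤ := by
  obtain ⟨S, hS⟩ : ∃ S, f.1 S ≠ 0 := by
    by_contra! h
    exact hf (Subtype.ext (funext h))
  exact ne_top_of_le_ne_top (ENat.natCast_ne_top _) (ordx_le hS)

lemma ordx_neg (f : PSer K) : ordx (-f) = ordx f := by
  simp only [ordx, PSer.neg_coeff, ne_eq, neg_eq_zero]

lemma normx_nonneg (f : PSer K) : 0 ≤ normx f := by
  unfold normx
  split_ifs <;> positivity

lemma normx_pos {f : PSer K} (hf : f ≠ 0) : 0 < normx f := by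
  rw [normx, if_neg (ordx_ne_top hf)]
  positivity

lemma normx_neg (f : PSer K) : normx (-f) = normx f := by
  rw [normx, normx, ordx_neg]

lemma normx_le_of_le_ordx {f : PSer K} {N : ℕ} (h : (N : ℕ∞) ≤ ordx f) :
    normx f ≤ 2⁻¹ ^ N := by
  unfold normx
  split_ifs with htop
  · positivity
  · refine pow_le_pow_of_le_one (by norm_num) (by norm_num) ?_
    exact ENat.natCast_le_natCast.mp (h.trans_eq (ENat.natCast_toNat htop).symm)

lemma normx_anti {f g : PSer K} (h : ordx f ≤ ordx g) : normx g ≤ normx f := by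
  by_cases hf : ordx f = ⊤
  · rw [normx, if_pos (top_le_iff.mp (hf ▸ h))]
    exact normx_nonneg f
  · calc normx g ≤ 2⁻¹ ^ (ordx f).toNat :=
          normx_le_of_le_ordx ((ENat.natCast_toNat hf).trans_le h)
      _ = normx f := by rw [normx, if_neg hf]

lemma normx_add_le (f g : PSer K) : normx (f + g) ≤ max (normx f) (normx g) := by
  have hmin : min (ordx f) (ordx g) ≤ ordx (f + g) := by
    refine le_ordx fun S hS => ?_
    by_cases hf : f.1 S = 0
    · exact (min_le_right _ _).trans (ordx_le (by simpa [hf] using hS))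
    · exact (min_le_left _ _).trans (ordx_le hf)
  rcases le_total (ordx f) (ordx g) with h | h
  · exact (normx_anti (min_eq_left h ▸ hmin)).trans (le_max_left _ _)
  · exact (normx_anti (min_eq_right h ▸ hmin)).trans (le_max_right _ _)

lemma normx_sub_le (f g : PSer K) : normx (f - g) ≤ max (normx f) (normx g) := by
  simpa only [sub_eq_add_neg, normx_neg] using normx_add_le f (-g)

lemma ContWrt.sub {α : Type*} {dα : α → α → ℝ} {u v : α → PSer K}
    (hu : ContWrt dα distx u) (hv : ContWrt dα distx v) :
    ContWrt dα distx fun a => u a - v a := by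
  intro a ε hε
  obtain ⟨r, hr, hur⟩ := hu a ε hε
  obtain ⟨s, hs, hvs⟩ := hv a ε hε
  refine ⟨min r s, lt_min hr hs, fun b hb => ?_⟩
  have hsplit : (u b - v b) - (u a - v a) = (u b - u a) - (v b - v a) := by abel
  calc distx (u b - v b) (u a - v a) = normx ((u b - u a) - (v b - v a)) := by rw [distx, hsplit]
    _ ≤ max (distx (u b) (u a)) (distx (v b) (v a)) := normx_sub_le _ _
    _ < ε :=
      max_lt (hur b (hb.trans_le (min_le_left _ _))) (hvs b (hb.trans_le (min_le_right _ _)))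

open Classical in
/-- Junk value `0` when `S` involves `y`. -/
noncomputable def muX (S : PT) : Kx K :=
  if h : OnlyX (mono S : PSer K) then ⟨mono S, h⟩ else 0

lemma onlyX_mono {S : PT} (h : degy S = 0) : OnlyX (mono S : PSer K) := by
  intro T hT
  by_cases hTS : T = S
  · exact hTS ▸ h
  · simp [hTS] at hT

lemma coe_muX {S : PT} (h : degy S = 0) : (muX S : Kx K).1 = mono S := by
  rw [muX, dif_pos (onlyX_mono h)]

noncomputable def truncX (f : Kx K) (N : ℕ) : Kx K :=
  ∑ S ∈ (f.1.finite_support_degx_le N).toFinset, f.1.1 S • muX S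

lemma truncX_coeff_of_degx_le (f : Kx K) {N : ℕ} {U : PT} (hU : degx U ≤ N) :
    (truncX f N).1.1 U = f.1.1 U := by
  classical
  have hterm : ∀ S ∈ (f.1.finite_support_degx_le N).toFinset,
      (f.1.1 S • muX S : Kx K).1.1 U = if U = S then f.1.1 S else 0 := fun S hS => by
    rw [Set.Finite.mem_toFinset] at hS
    simp [coe_muX (f.2 S hS.1)]
  rw [truncX, Submodule.coe_sum, PSer.sum_coeff, Finset.sum_congr rfl hterm, Finset.sum_ite_eq]
  split_ifs with hmem
  · rfl
  · by_contra hne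
    exact hmem ((Set.Finite.mem_toFinset _).mpr ⟨Ne.symm hne, hU⟩)

lemma distKx_truncX_le (f : Kx K) (N : ℕ) : distKx (truncX f N) f ≤ 2⁻¹ ^ N := by
  refine normx_le_of_le_ordx (le_ordx fun U hU => ?_)
  by_contra! hlt
  exact hU (by
    rw [PSer.sub_coeff, truncX_coeff_of_degx_le f (ENat.natCast_lt_natCast.mp hlt).le, sub_self])

lemma eq_zero_of_forall_muX {δ : Kx K → PSer K} (hlin : IsLinearMap K δ)
    (hcont : ContWrt distKx distx δ) (hmono : ∀ S : PT, degy S = 0 → δ (muX S) = 0)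
    (f : Kx K) : δ f = 0 := by
  have htrunc : ∀ N, δ (truncX f N) = 0 := fun N => by
    change IsLinearMap.mk' δ hlin _ = 0
    rw [truncX, map_sum]
    refine Finset.sum_eq_zero fun S hS => ?_
    rw [Set.Finite.mem_toFinset] at hS
    rw [map_smul, IsLinearMap.mk'_apply, hmono S (f.2 S hS.1), smul_zero]
  by_contra hne
  obtain ⟨r, hr, hball⟩ := hcont f _ (normx_pos hne)
  obtain ⟨N, hN⟩ := exists_pow_lt_of_lt_one hr (by norm_num : (2⁻¹ : ℝ) < 1)
  have hclose := hball (truncX f N) ((distKx_truncX_le f N).trans_lt hN)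
  rw [htrunc, distx, zero_sub, normx_neg] at hclose
  exact lt_irrefl _ hclose

lemma muX_none : (muX none : Kx K) = oneX :=
  Subtype.ext (coe_muX rfl)

lemma muX_leaf_vx : (muX (some (.leaf .vx)) : Kx K) = xX :=
  Subtype.ext (coe_muX (by simp [degy, PTree.countLeaf]))

lemma degy_eq_zero_of_mem_children {S u : PT} (h : degy S = 0) (hu : u ∈ children S) :
    degy u = 0 := by
  rcases S with _ | _ | ⟨t₁, t₂, ts⟩
  · simp [children] at hu
  · simp [children] at hu
  · rw [← graft_children, degy_graft] at h
    exact List.sum_eq_zero_iff.mp h _ (List.mem_map_of_mem hu)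

lemma sizeOf_lt_of_mem_children {S u : PT} (hu : u ∈ children S) : sizeOf u < sizeOf S := by
  rcases S with _ | _ | ⟨t₁, t₂, ts⟩
  · simp [children] at hu
  · simp [children] at hu
  · simp only [children, List.mem_cons, List.mem_map] at hu
    have hnode := PTree.node.sizeOf_spec t₁ t₂ ts
    rcases hu with rfl | rfl | ⟨w, hw, rfl⟩
    · simp only [Option.some.sizeOf_spec]; omega
    · simp only [Option.some.sizeOf_spec]; omega
    · have := List.sizeOf_lt_of_mem hw
      simp only [Option.some.sizeOf_spec]; omega

lemma muX_node {t₁ t₂ : PTree} {ts : List PTree} (h : degy (some (.node t₁ t₂ ts)) = 0) :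
    (muX (some (.node t₁ t₂ ts)) : Kx K) =
      bulletX ((children (some (.node t₁ t₂ ts))).map muX) := by
  refine Subtype.ext ?_
  rw [coe_muX h, coe_bulletX, List.map_map,
    List.map_congr_left (f := (fun f : Kx K => f.1) ∘ muX) (g := fun S => (mono S : PSer K))
      fun u hu => coe_muX (degy_eq_zero_of_mem_children h hu),
    bullet_map_mono, graft_children]

theorem muX_induction {P : Kx K → Prop} (hone : P oneX) (hx : P xX)
    (hgraft : ∀ fs : List (Kx K), 2 ≤ fs.length → (∀ f ∈ fs, P f) → P (bulletX fs)) :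
    ∀ S : PT, degy S = 0 → P (muX S)
  | none, _ => muX_none (K := K) ▸ hone
  | some (.leaf .vx), _ => muX_leaf_vx (K := K) ▸ hx
  | some (.leaf .vy), h => absurd h (by simp [degy, PTree.countLeaf])
  | some (.node t₁ t₂ ts), h => by
    rw [muX_node h]
    refine hgraft _ (by simp [children]) fun f hf => ?_
    obtain ⟨u, hu, rfl⟩ := List.mem_map.mp hf
    exact muX_induction hone hx hgraft u (degy_eq_zero_of_mem_children h hu)
termination_by S => sizeOf S
decreasing_by exact sizeOf_lt_of_mem_children hu

theorem eq_zero_of_map_bulletX {δ : Kx K → PSer K} (hlin : IsLinearMap K δ)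
    (hcont : ContWrt distKx distx δ) (hone : δ oneX = 0) (hx : δ xX = 0)
    (hgraft : ∀ fs : List (Kx K), 2 ≤ fs.length → (∀ f ∈ fs, δ f = 0) →
      δ (bulletX fs) = 0) :
    ∀ f, δ f = 0 :=
  eq_zero_of_forall_muX hlin hcont (muX_induction hone hx hgraft)

lemma IsSubstHom.apply_coe {g : Kx K} {φ : Kx K → Kx K} (hφ : IsSubstHomX g φ)
    {h : PSer K} {dφ : PSer K → PSer K} (hdφ : IsSubstHom g.1 h dφ) (f : Kx K) :
    dφ f.1 = (φ f).1 := by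
  have hlin : IsLinearMap K fun f : Kx K => dφ f.1 - (φ f).1 :=
    ((IsLinearMap.mk' dφ hdφ.linear).comp (kxSub K).subtype -
      (kxSub K).subtype.comp (IsLinearMap.mk' φ hφ.linear)).isLinear
  have hcont : ContWrt distKx distx fun f : Kx K => dφ f.1 - (φ f).1 :=
    ContWrt.sub (u := fun f : Kx K => dφ f.1)
      (fun f ε hε => (hdφ.cont f.1 ε hε).imp fun _ ⟨hr, hb⟩ => ⟨hr, fun b => hb b.1⟩)
      hφ.cont
  refine sub_eq_zero.mp (eq_zero_of_map_bulletX hlin hcont ?_ ?_ (fun fs hfs hagree => ?_) f)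
  · exact sub_eq_zero.mpr ((hdφ.map_one).trans (congrArg Subtype.val hφ.map_one).symm)
  · exact sub_eq_zero.mpr ((hdφ.map_X).trans (congrArg Subtype.val hφ.map_X).symm)
  · rw [sub_eq_zero, coe_bulletX, hdφ.map_graft _ (by simpa), hφ.map_graft fs hfs, coe_bulletX,
      List.map_map, List.map_map]
    exact congrArg bullet (List.map_congr_left fun f hf => sub_eq_zero.mp (hagree f hf))

lemma IsUDeriv.leibniz_map {d : Kx K → PSer K} (hd : IsUDeriv d) (φ : Kx K → Kx K)
    (fs : List (Kx K)) (hfs : 2 ≤ fs.length) :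
    d (bulletX (fs.map φ)) = ∑ i : Fin fs.length,
      bullet ((fs.map fun t => (φ t).1).set i (d (φ (fs.get i)))) := by
  rw [hd.leibniz _ (by simpa), List.map_map]
  exact Fintype.sum_equiv (finCongr (List.length_map _)) _ _ fun i => by simp [Function.comp_def]

lemma leibniz_comp_sub_comp {g : Kx K} {φ : Kx K → Kx K} (hφ : IsSubstHomX g φ)
    {d : Kx K → PSer K} (hd : IsUDeriv d) {h : PSer K} {dφ : PSer K → PSer K}
    (hdφ : IsSubstHom g.1 h dφ) (fs : List (Kx K)) (hfs : 2 ≤ fs.length) :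
    dφ (d (bulletX fs)) - d (φ (bulletX fs)) = ∑ i : Fin fs.length,
      bullet ((fs.map fun t => (φ t).1).set i (dφ (d (fs.get i)) - d (φ (fs.get i)))) := by
  have hdφd : dφ (d (bulletX fs)) = ∑ i : Fin fs.length,
      bullet ((fs.map fun t => (φ t).1).set i (dφ (d (fs.get i)))) := by
    rw [hd.leibniz fs hfs]
    refine (map_sum (IsLinearMap.mk' dφ hdφ.linear) _ _).trans
      (Finset.sum_congr rfl fun i _ => ?_)
    rw [IsLinearMap.mk'_apply, hdφ.map_graft _ (by simpa), List.map_set, List.map_map,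
      List.map_congr_left (f := dφ ∘ fun f : Kx K => f.1) (g := fun t => (φ t).1)
        fun f _ => hdφ.apply_coe hφ f]
  rw [hdφd, hφ.map_graft fs hfs, hd.leibniz_map φ fs hfs, ← Finset.sum_sub_distrib]
  exact Finset.sum_congr rfl fun i _ => (bullet_set_sub _ (by simp) _ _).symm

end Planar

open Planar in
theorem planar_delta_derivation_general (K : Type) [Field K]
    (g : Kx K)
    (φ : Kx K → Kx K) (hφ : IsSubstHomX g φ)
    (d : Kx K → PSer K) (hd : IsUDeriv d)
    (dφ : PSer K → PSer K) (hdφ : IsSubstHom g.1 (d g) dφ) :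
    (∀ fs : List (Kx K), 2 ≤ fs.length →
      (fun f : Kx K => dφ (d f) - d (φ f)) (bulletX fs) =
        ∑ i : Fin fs.length,
          bullet ((fs.map (fun t => (φ t).1)).set i.1
            ((fun f : Kx K => dφ (d f) - d (φ f)) (fs.get i)))) ∧
    (∀ δ : Kx K → PSer K, IsLinearMap K δ → ContWrt distKx distx δ →
      (∀ fs : List (Kx K), 2 ≤ fs.length →
        δ (bulletX fs) = ∑ i : Fin fs.length,
          bullet ((fs.map (fun t => (φ t).1)).set i.1 (δ (fs.get i)))) →
      δ xX = 0 → δ oneX = 0 → ∀ f : Kx K, δ f = 0) := by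
  refine ⟨leibniz_comp_sub_comp hφ hd hdφ, fun δ hlin hcont hleibniz hx hone => ?_⟩
  refine eq_zero_of_map_bulletX hlin hcont hone hx fun fs hfs hzero => ?_
  rw [hleibniz fs hfs]
  refine Finset.sum_eq_zero fun i _ => bullet_eq_zero_of_zero_mem ?_
  rw [← hzero _ (List.get_mem fs i)]
  exact List.mem_set (by simp) _

open Planar in
/-- With `φ = φ_g` and `dφ` as in the chain rule, the map
`δ = (dφ) ∘ d − d ∘ φ` satisfies
`δ(•_m(f₁,…,f_m)) = Σ_i •_m(φ(f₁),…,φ(f_{i−1}), δ(f_i), φ(f_{i+1}),…,φ(f_m))`;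
consequently any continuous `K`-linear map `δ : K{{x}} → K{{x,y}` satisfying this
identity together with `δ(x) = 0` and `δ(1_P) = 0` is identically zero. -/
theorem planar_delta_derivation (K : Type) [Field K]
    (g : Kx K) (hg : 1 ≤ ordx g.1)
    (φ : Kx K → Kx K) (hφ : IsSubstHomX g φ)
    (d : Kx K → PSer K) (hd : IsUDeriv d)
    (dφ : PSer K → PSer K) (hdφ : IsSubstHom g.1 (d g) dφ) :
    (∀ fs : List (Kx K), 2 ≤ fs.length →
      (fun f : Kx K => dφ (d f) - d (φ f)) (bulletX fs) =
        ∑ i : Fin fs.length,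
          bullet ((fs.map (fun t => (φ t).1)).set i.1
            ((fun f : Kx K => dφ (d f) - d (φ f)) (fs.get i)))) ∧
    (∀ δ : Kx K → PSer K, IsLinearMap K δ → ContWrt distKx distx δ →
      (∀ fs : List (Kx K), 2 ≤ fs.length →
        δ (bulletX fs) = ∑ i : Fin fs.length,
          bullet ((fs.map (fun t => (φ t).1)).set i.1 (δ (fs.get i)))) →
      δ xX = 0 → δ oneX = 0 → ∀ f : Kx K, δ f = 0) :=
  planar_delta_derivation_general K g φ hφ d hd dφ hdφ
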